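/- arXiv:2501.08481 — 3 statements merged into one kernel-verified Lean document; each statement's English description precedes it below -/
import Mathlib

section
/- Every logarithmically completely monotone function on (0,∞) is completely monotone. -/
def CompletelyMonotone (f : ℝ → ℝ) : Prop :=
  ∀ n : ℕ, ∀ s : ℝ, 0 < s → 0 ≤ (-1 : ℝ) ^ n * iteratedDeriv n f s

def LogCompletelyMonotone (h : ℝ → ℝ) : Prop :=
  (∀ s : ℝ, 0 < s → 0 < h s) ∧
    CompletelyMonotone (fun s => -(deriv (fun u => Real.log (h u)) s))

/-!
With `g = -(log h)'` we have `-h' = g h`, and by the product rule and induction on `n`, a product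
of two functions satisfying the sign conditions `(-1)ᵏ f⁽ᵏ⁾ ≥ 0`, `k ≤ n`, at a point satisfies
them too. So if `h` satisfies them up to order `n`, it does up to order `n + 1`.

This needs genuine derivatives, whereas `iteratedDeriv` is `0` where they fail to exist. Where
`h⁽ⁿ⁺¹⁾ ≠ 0` they do exist, because a zero of a one-signed function is a critical point; elsewhere
the sign condition of order `n + 1` holds trivially.
-/

open Filter Topology

section IteratedDifferentiableAt

variable {𝕜 : Type*} [NontriviallyNormedField 𝕜]

/-- `f` is `n + 1` times differentiable at `x` in the classical sense: its derivatives of order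
`< n` are differentiable near `x` and the `n`-th one at `x`. -/
def IteratedDifferentiableAt : ℕ → (𝕜 → 𝕜) → 𝕜 → Prop
  | 0, f, x => DifferentiableAt 𝕜 f x
  | n + 1, f, x => (∀ᶠ y in 𝓝 x, DifferentiableAt 𝕜 f y) ∧ IteratedDifferentiableAt n (deriv f) x

namespace IteratedDifferentiableAt

variable {x : 𝕜}

theorem differentiableAt {n : ℕ} {f : 𝕜 → 𝕜} (hf : IteratedDifferentiableAt n f x) :
    DifferentiableAt 𝕜 f x := by
  cases n with
  | zero => exact hf
  | succ n => exact hf.1.self_of_nhds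

theorem of_succ {n : ℕ} {f : 𝕜 → 𝕜} (hf : IteratedDifferentiableAt (n + 1) f x) :
    IteratedDifferentiableAt n f x := by
  induction n generalizing f with
  | zero => exact hf.differentiableAt
  | succ n ih => exact ⟨hf.1, ih hf.2⟩

theorem congr_of_eventuallyEq {n : ℕ} {f g : 𝕜 → 𝕜} (hf : IteratedDifferentiableAt n f x)
    (hfg : f =ᶠ[𝓝 x] g) : IteratedDifferentiableAt n g x := by
  induction n generalizing f g with
  | zero => exact DifferentiableAt.congr_of_eventuallyEq hf hfg.symm
  | succ n ih =>
    refine ⟨?_, ih hf.2 hfg.deriv⟩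
    filter_upwards [hf.1, hfg.eventuallyEq_nhds] with y hy hfgy
    exact hy.congr_of_eventuallyEq hfgy.symm

theorem neg {n : ℕ} {f : 𝕜 → 𝕜} (hf : IteratedDifferentiableAt n f x) :
    IteratedDifferentiableAt n (fun y => -f y) x := by
  induction n generalizing f with
  | zero => exact DifferentiableAt.neg hf
  | succ n ih =>
    refine ⟨hf.1.mono fun y hy => hy.neg, ?_⟩
    simpa only [deriv.fun_neg'] using ih hf.2

theorem add {n : ℕ} {f g : 𝕜 → 𝕜} (hf : IteratedDifferentiableAt n f x)
    (hg : IteratedDifferentiableAt n g x) : IteratedDifferentiableAt n (fun y => f y + g y) x := by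
  induction n generalizing f g with
  | zero => exact DifferentiableAt.add hf hg
  | succ n ih =>
    refine ⟨?_, (ih hf.2 hg.2).congr_of_eventuallyEq ?_⟩
    all_goals filter_upwards [hf.1, hg.1] with y hfy hgy
    · exact hfy.add hgy
    · exact (deriv_fun_add hfy hgy).symm

theorem mul {n : ℕ} {f g : 𝕜 → 𝕜} (hf : IteratedDifferentiableAt n f x)
    (hg : IteratedDifferentiableAt n g x) : IteratedDifferentiableAt n (fun y => f y * g y) x := by
  induction n generalizing f g with
  | zero => exact DifferentiableAt.mul hf hg
  | succ n ih =>
    refine ⟨?_, ((ih hf.2 hg.of_succ).add (ih hf.of_succ hg.2)).congr_of_eventuallyEq ?_⟩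
    all_goals filter_upwards [hf.1, hg.1] with y hfy hgy
    · exact hfy.mul hgy
    · exact (deriv_fun_mul hfy hgy).symm

theorem inv {n : ℕ} {f : 𝕜 → 𝕜} (hf : IteratedDifferentiableAt n f x) (hx : f x ≠ 0) :
    IteratedDifferentiableAt n (fun y => (f y)⁻¹) x := by
  induction n generalizing f with
  | zero => exact DifferentiableAt.inv hf hx
  | succ n ih =>
    have hne : ∀ᶠ y in 𝓝 x, f y ≠ 0 := hf.differentiableAt.continuousAt.eventually_ne hx
    have hinv := ih hf.of_succ hx
    refine ⟨?_, ((hf.2.neg.mul hinv).mul hinv).congr_of_eventuallyEq ?_⟩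
    all_goals filter_upwards [hf.1, hne] with y hfy hy
    · exact hfy.inv hy
    · rw [deriv_fun_inv'' hfy hy]
      field_simp

theorem of_iteratedDeriv {n : ℕ} {f : 𝕜 → 𝕜}
    (hnear : ∀ᶠ y in 𝓝 x, ∀ k < n, DifferentiableAt 𝕜 (iteratedDeriv k f) y)
    (hx : DifferentiableAt 𝕜 (iteratedDeriv n f) x) : IteratedDifferentiableAt n f x := by
  induction n generalizing f with
  | zero => rw [iteratedDeriv_zero] at hx; exact hx
  | succ n ih =>
    refine ⟨hnear.mono fun y hy => by simpa using hy 0 n.succ_pos, ih ?_ ?_⟩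
    · filter_upwards [hnear] with y hy k hk
      simpa [iteratedDeriv_succ'] using hy (k + 1) (by omega)
    · rwa [iteratedDeriv_succ'] at hx

end IteratedDifferentiableAt

end IteratedDifferentiableAt

/-- `iteratedDeriv` is `0` where a derivative fails to exist, so this implies no regularity. -/
def CompletelyMonotoneAt (n : ℕ) (f : ℝ → ℝ) (x : ℝ) : Prop :=
  ∀ k ≤ n, 0 ≤ (-1 : ℝ) ^ k * iteratedDeriv k f x

section CompletelyMonotoneAt

variable {n : ℕ} {f g : ℝ → ℝ} {x : ℝ}

theorem completelyMonotoneAt_zero_iff : CompletelyMonotoneAt 0 f x ↔ 0 ≤ f x := by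
  simp [CompletelyMonotoneAt]

theorem completelyMonotoneAt_succ_iff :
    CompletelyMonotoneAt (n + 1) f x ↔ 0 ≤ f x ∧ CompletelyMonotoneAt n (fun y => -deriv f y) x := by
  have hshift : ∀ k, (-1 : ℝ) ^ (k + 1) * iteratedDeriv (k + 1) f x
      = (-1) ^ k * iteratedDeriv k (fun y => -deriv f y) x := by
    intro k
    rw [iteratedDeriv_fun_neg, iteratedDeriv_succ']
    ring
  constructor
  · intro hf
    exact ⟨by simpa using hf 0 (Nat.zero_le _), fun k hk => hshift k ▸ hf (k + 1) (by omega)⟩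
  · rintro ⟨hf0, hf⟩ (_ | k) hk
    · simpa using hf0
    · exact (hshift k).symm ▸ hf k (by omega)

namespace CompletelyMonotoneAt

theorem of_le {m : ℕ} (hf : CompletelyMonotoneAt n f x) (hmn : m ≤ n) :
    CompletelyMonotoneAt m f x :=
  fun k hk => hf k (hk.trans hmn)

theorem congr_of_eventuallyEq (hf : CompletelyMonotoneAt n f x) (hfg : f =ᶠ[𝓝 x] g) :
    CompletelyMonotoneAt n g x :=
  fun k hk => hfg.iteratedDeriv_eq k ▸ hf k hk

theorem add (hf : CompletelyMonotoneAt (n + 1) f x) (hg : CompletelyMonotoneAt (n + 1) g x)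
    (hdf : IteratedDifferentiableAt n f x) (hdg : IteratedDifferentiableAt n g x) :
    CompletelyMonotoneAt (n + 1) (fun y => f y + g y) x := by
  induction n generalizing f g with
  | zero =>
    simp only [completelyMonotoneAt_succ_iff, completelyMonotoneAt_zero_iff] at hf hg ⊢
    rw [deriv_fun_add hdf hdg]
    constructor <;> linarith
  | succ n ih =>
    rw [completelyMonotoneAt_succ_iff] at hf hg ⊢
    refine ⟨add_nonneg hf.1 hg.1, (ih hf.2 hg.2 hdf.2.neg hdg.2.neg).congr_of_eventuallyEq ?_⟩
    filter_upwards [hdf.1, hdg.1] with y hfy hgy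
    rw [deriv_fun_add hfy hgy]
    ring

theorem mul (hf : CompletelyMonotoneAt (n + 1) f x) (hg : CompletelyMonotoneAt (n + 1) g x)
    (hdf : IteratedDifferentiableAt n f x) (hdg : IteratedDifferentiableAt n g x) :
    CompletelyMonotoneAt (n + 1) (fun y => f y * g y) x := by
  induction n generalizing f g with
  | zero =>
    simp only [completelyMonotoneAt_succ_iff, completelyMonotoneAt_zero_iff] at hf hg ⊢
    rw [deriv_fun_mul hdf hdg]
    constructor <;> nlinarith
  | succ n ih =>
    obtain ⟨hf0, hf'⟩ := completelyMonotoneAt_succ_iff.1 hf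
    obtain ⟨hg0, hg'⟩ := completelyMonotoneAt_succ_iff.1 hg
    have hdf' := hdf.2.neg
    have hdg' := hdg.2.neg
    have h₁ := ih hf' (hg.of_le n.succ.le_succ) hdf' hdg.of_succ
    have h₂ := ih (hf.of_le n.succ.le_succ) hg' hdf.of_succ hdg'
    refine completelyMonotoneAt_succ_iff.2 ⟨mul_nonneg hf0 hg0, ?_⟩
    refine (h₁.add h₂ (hdf'.mul hdg.of_succ) (hdf.of_succ.mul hdg')).congr_of_eventuallyEq ?_
    filter_upwards [hdf.1, hdg.1] with y hfy hgy
    rw [deriv_fun_mul hfy hgy]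
    ring

end CompletelyMonotoneAt

end CompletelyMonotoneAt

section AlternatingSigns

variable {f : ℝ → ℝ} {x : ℝ}

/-- A zero of a function of constant sign is a critical point. -/
theorem iteratedDeriv_succ_eq_zero_of_eventually_nonneg {k : ℕ}
    (hsign : ∀ᶠ y in 𝓝 x, 0 ≤ (-1 : ℝ) ^ k * iteratedDeriv k f y)
    (hx : iteratedDeriv k f x = 0) : iteratedDeriv (k + 1) f x = 0 := by
  have hmin : IsLocalMin (fun y => (-1 : ℝ) ^ k * iteratedDeriv k f y) x := by
    filter_upwards [hsign] with y hy
    simpa [hx] using hy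
  have hcrit := hmin.deriv_eq_zero
  rw [deriv_const_mul_field'] at hcrit
  rw [iteratedDeriv_succ]
  simpa using hcrit

theorem iteratedDeriv_ne_zero_of_le {n j : ℕ}
    (hsign : ∀ k ≤ n, ∀ᶠ y in 𝓝 x, 0 ≤ (-1 : ℝ) ^ k * iteratedDeriv k f y)
    (hx : iteratedDeriv n f x ≠ 0) (hj : j ≤ n) : iteratedDeriv j f x ≠ 0 := by
  induction hj using Nat.decreasingInduction with
  | self => exact hx
  | of_succ k hk ih =>
    exact fun h0 => ih (iteratedDeriv_succ_eq_zero_of_eventually_nonneg (hsign k hk.le) h0)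

/-- A nonzero `deriv φ y` certifies that `φ` is differentiable at `y`, and nonvanishing of the
`n`-th derivative near `x` propagates to all lower orders. -/
theorem iteratedDifferentiableAt_of_alternating_sign {U : Set ℝ} {n : ℕ} (hU : IsOpen U)
    (hxU : x ∈ U) (hsign : ∀ k ≤ n, ∀ y ∈ U, 0 ≤ (-1 : ℝ) ^ k * iteratedDeriv k f y)
    (hx : iteratedDeriv (n + 1) f x ≠ 0) : IteratedDifferentiableAt n f x := by
  have hsign' : ∀ y ∈ U, ∀ k ≤ n, ∀ᶠ z in 𝓝 y, 0 ≤ (-1 : ℝ) ^ k * iteratedDeriv k f z :=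
    fun y hy k hk => eventually_of_mem (hU.mem_nhds hy) (hsign k hk)
  have hdiff : DifferentiableAt ℝ (iteratedDeriv n f) x :=
    differentiableAt_of_deriv_ne_zero (by rwa [← iteratedDeriv_succ])
  have hne : iteratedDeriv n f x ≠ 0 := fun h0 =>
    hx (iteratedDeriv_succ_eq_zero_of_eventually_nonneg (hsign' x hxU n le_rfl) h0)
  refine .of_iteratedDeriv ?_ hdiff
  filter_upwards [hU.mem_nhds hxU, hdiff.continuousAt.eventually_ne hne] with y hyU hy k hk
  refine differentiableAt_of_deriv_ne_zero ?_
  rw [← iteratedDeriv_succ]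
  exact iteratedDeriv_ne_zero_of_le (hsign' y hyU) hy hk

end AlternatingSigns

theorem neg_deriv_log_mul_self {h : ℝ → ℝ} {x : ℝ} (hd : DifferentiableAt ℝ h x) (hx : h x ≠ 0) :
    -deriv (fun u => Real.log (h u)) x * h x = -deriv h x := by
  rw [deriv.log hd hx]
  field_simp

theorem LogCompletelyMonotone.completelyMonotoneAt_succ {h : ℝ → ℝ} (hh : LogCompletelyMonotone h)
    {n : ℕ} {x : ℝ} (hx : 0 < x) (hd : IteratedDifferentiableAt n h x)
    (hcm : CompletelyMonotoneAt n h x) : CompletelyMonotoneAt (n + 1) h x := by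
  obtain ⟨hpos, hlog⟩ := hh
  set g := fun s => -deriv (fun u => Real.log (h u)) s
  have hg : CompletelyMonotoneAt n g x := fun k _ => hlog k x hx
  refine completelyMonotoneAt_succ_iff.2 ⟨(hpos x hx).le, ?_⟩
  cases n with
  | zero =>
    rw [completelyMonotoneAt_zero_iff] at hg hcm ⊢
    rw [← neg_deriv_log_mul_self hd (hpos x hx).ne']
    exact mul_nonneg hg hcm
  | succ n =>
    have hne : ∀ᶠ y in 𝓝 x, h y ≠ 0 := by
      filter_upwards [Ioi_mem_nhds hx] with y hy using (hpos y hy).ne'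
    have hdg : IteratedDifferentiableAt n g x := by
      refine (hd.2.neg.mul (hd.of_succ.inv (hpos x hx).ne')).congr_of_eventuallyEq ?_
      filter_upwards [hd.1, hne] with y hdy hy
      rw [← neg_deriv_log_mul_self hdy hy]
      exact mul_inv_cancel_right₀ hy _
    refine (hg.mul hcm hdg hd.of_succ).congr_of_eventuallyEq ?_
    filter_upwards [hd.1, hne] with y hdy hy
    exact neg_deriv_log_mul_self hdy hy

/-- Every logarithmically completely monotone function on `(0,∞)` is completely monotone. -/
theorem completelyMonotone_of_logCompletelyMonotone (h : ℝ → ℝ)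
    (hh : LogCompletelyMonotone h) : CompletelyMonotone h := by
  intro n
  induction n using Nat.strong_induction_on with
  | _ n ih =>
  intro x hx
  rcases n with _ | n
  · simpa using (hh.1 x hx).le
  by_cases h0 : iteratedDeriv (n + 1) h x = 0
  · simp [h0]
  have hsign : ∀ k ≤ n, ∀ y ∈ Set.Ioi 0, 0 ≤ (-1 : ℝ) ^ k * iteratedDeriv k h y :=
    fun k hk => ih k (by omega)
  have hd := iteratedDifferentiableAt_of_alternating_sign isOpen_Ioi hx hsign h0
  exact hh.completelyMonotoneAt_succ hx hd (fun k hk => hsign k hk x hx) (n + 1) le_rfl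
end

section
/- If k: (0,∞) → (0,∞) is completely monotone and ξ ≥ 0, and s ↦ k(s)^{1/2} is a Stieltjes function, then the function s ↦ k(s)·exp(−ξ·s·k(s)^{1/2}) is completely monotone. -/
/-!
Write `√k = B + ∫ (s + t)⁻¹ dν` on `(0, ∞)`, with `ν` carried by `[0, ∞)`. Differentiating under
the integral, the `n`-th derivative of `(s √k(s))'` is `(-1)ⁿ (n + 1)! ∫ t (s + t)⁻⁽ⁿ⁺²⁾ dν`
(plus `B` when `n = 0`), so `U(s) = ξ s √k(s)` has a completely monotone derivative. Since
`(e⁻ᵁ)' = -U' e⁻ᵁ`, the Leibniz rule and induction on the order show that `e⁻ᵁ` is completely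
monotone, and the Leibniz rule once more gives the product with `k`.
-/

open MeasureTheory Set

def IsStieltjesFun (g : ℝ → ℝ) : Prop :=
  ∃ (A B : ℝ) (σ : Measure ℝ), 0 ≤ A ∧ 0 ≤ B ∧ σ (Set.Iic (0 : ℝ)) = 0 ∧
    (∫⁻ t, ENNReal.ofReal (1 / (1 + t)) ∂σ) < ⊤ ∧
    ∀ s : ℝ, 0 < s → g s = A / s + B + ∫ t, 1 / (s + t) ∂σ

open Filter Topology
open scoped ContDiff

theorem neg_one_pow_mul_sum_choose_nonneg {a b : ℕ → ℝ} {n : ℕ}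
    (ha : ∀ i ≤ n, 0 ≤ (-1) ^ i * a i) (hb : ∀ i ≤ n, 0 ≤ (-1) ^ i * b i) :
    0 ≤ (-1) ^ n * ∑ i ∈ Finset.range (n + 1), (n.choose i : ℝ) * a i * b (n - i) := by
  rw [Finset.mul_sum]
  refine Finset.sum_nonneg fun i hi => ?_
  have hin : i ≤ n := Nat.lt_succ_iff.mp (Finset.mem_range.mp hi)
  have hsplit : (-1 : ℝ) ^ n * (n.choose i * a i * b (n - i))
      = n.choose i * (((-1) ^ i * a i) * ((-1) ^ (n - i) * b (n - i))) := by
    rw [← Nat.add_sub_cancel' hin, pow_add, Nat.add_sub_cancel_left]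
    ring
  rw [hsplit]
  exact mul_nonneg (Nat.cast_nonneg _) (mul_nonneg (ha i hin) (hb (n - i) (Nat.sub_le n i)))

namespace CompletelyMonotone

theorem const_mul {f : ℝ → ℝ} (hf : CompletelyMonotone f) {c : ℝ} (hc : 0 ≤ c) :
    CompletelyMonotone fun s => c * f s := fun n s hs => by
  rw [iteratedDeriv_const_mul_field, mul_left_comm]
  exact mul_nonneg hc (hf n s hs)

theorem mul {f g : ℝ → ℝ} (hf : CompletelyMonotone f) (hg : CompletelyMonotone g)
    (hf' : ContDiffOn ℝ ∞ f (Ioi 0)) (hg' : ContDiffOn ℝ ∞ g (Ioi 0)) :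
    CompletelyMonotone fun s => f s * g s := fun n s hs => by
  have hs' : Ioi (0 : ℝ) ∈ 𝓝 s := isOpen_Ioi.mem_nhds hs
  rw [iteratedDeriv_fun_mul ((hf'.contDiffAt hs').of_le (mod_cast le_top))
    ((hg'.contDiffAt hs').of_le (mod_cast le_top))]
  exact neg_one_pow_mul_sum_choose_nonneg (fun i _ => hf i s hs) (fun i _ => hg i s hs)

theorem exp_neg {U : ℝ → ℝ} (hU : ContDiffOn ℝ ∞ U (Ioi 0))
    (hU' : CompletelyMonotone (deriv U)) : CompletelyMonotone fun s => Real.exp (-U s) := by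
  set E := fun s => Real.exp (-U s)
  have hE : ContDiffOn ℝ ∞ E (Ioi 0) := hU.neg.exp
  have hdU : ContDiffOn ℝ ∞ (deriv U) (Ioi 0) := hU.deriv_of_isOpen isOpen_Ioi (by simp)
  intro n
  induction n using Nat.strong_induction_on with
  | _ n ih =>
    intro s hs
    have hs' : Ioi (0 : ℝ) ∈ 𝓝 s := isOpen_Ioi.mem_nhds hs
    cases n with
    | zero => simpa [E] using (Real.exp_pos _).le
    | succ m =>
      have hderiv : deriv E =ᶠ[𝓝 s] fun x => -(deriv U x * E x) := by
        filter_upwards [hs'] with x hx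
        have hUx := ((hU.contDiffAt (isOpen_Ioi.mem_nhds hx)).differentiableAt
          (by simp)).hasDerivAt
        rw [hUx.fun_neg.exp.deriv]
        ring
      have hleibniz : iteratedDeriv (m + 1) E s = -∑ i ∈ Finset.range (m + 1),
          (m.choose i : ℝ) * iteratedDeriv i (deriv U) s * iteratedDeriv (m - i) E s := by
        rw [iteratedDeriv_succ', hderiv.iteratedDeriv_eq, iteratedDeriv_fun_neg,
          iteratedDeriv_fun_mul ((hdU.contDiffAt hs').of_le (mod_cast le_top))
            ((hE.contDiffAt hs').of_le (mod_cast le_top))]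
      rw [hleibniz, pow_succ, mul_neg_one, neg_mul_neg]
      exact neg_one_pow_mul_sum_choose_nonneg (fun i _ => hU' i s hs)
        (fun i hi => ih i (by omega) s hs)

end CompletelyMonotone

section DerivativeChain

variable {𝕜 F : Type*} [NontriviallyNormedField 𝕜] [NormedAddCommGroup F] [NormedSpace 𝕜 F]
  {u : Set 𝕜} {G : ℕ → 𝕜 → F}

theorem iteratedDeriv_eqOn_of_hasDerivAt_succ (hu : IsOpen u)
    (hG : ∀ n, ∀ x ∈ u, HasDerivAt (G n) (G (n + 1) x) x) {f : 𝕜 → F} (hf : EqOn f (G 0) u)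
    (n : ℕ) : EqOn (iteratedDeriv n f) (G n) u := by
  induction n with
  | zero => simpa using hf
  | succ n ih =>
    intro x hx
    have hloc : iteratedDeriv n f =ᶠ[𝓝 x] G n := eventually_of_mem (hu.mem_nhds hx) ih
    rw [iteratedDeriv_succ, hloc.deriv_eq]
    exact (hG n x hx).deriv

theorem contDiffOn_of_hasDerivAt_succ (hu : IsOpen u)
    (hG : ∀ n, ∀ x ∈ u, HasDerivAt (G n) (G (n + 1) x) x) : ContDiffOn 𝕜 ∞ (G 0) u := by
  suffices h : ∀ n : ℕ, ∀ k, ContDiffOn 𝕜 n (G k) u from contDiffOn_infty.2 fun n => h n 0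
  intro n
  induction n with
  | zero => exact fun k => contDiffOn_zero.2 fun x hx => (hG k x hx).continuousAt.continuousWithinAt
  | succ n ih =>
    intro k
    rw [Nat.cast_succ, contDiffOn_succ_iff_deriv_of_isOpen hu]
    exact ⟨fun x hx => (hG k x hx).differentiableAt.differentiableWithinAt, by simp,
      (ih (k + 1)).congr fun x hx => (hG k x hx).deriv⟩

end DerivativeChain

theorem iteratedDeriv_succ_fun_id_mul {𝕜 : Type*} [NontriviallyNormedField 𝕜] {f : 𝕜 → 𝕜}
    {x : 𝕜} {n : ℕ} (hf : ContDiffAt 𝕜 (n + 1 : ℕ) f x) :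
    iteratedDeriv (n + 1) (fun y => y * f y) x
      = x * iteratedDeriv (n + 1) f x + (n + 1) * iteratedDeriv n f x := by
  rw [iteratedDeriv_fun_mul contDiffAt_fun_id hf, Finset.sum_range_succ', Finset.sum_range_succ',
    Finset.sum_eq_zero fun i _ => by simp [iteratedDeriv_fun_id]]
  simp [iteratedDeriv_fun_id, add_comm]

theorem inv_add_pow_le {a c t : ℝ} (m : ℕ) (hc : 0 < c) (hca : c ≤ a) (hc1 : c ≤ 1)
    (ht : 0 ≤ t) : ((a + t) ^ (m + 1))⁻¹ ≤ (c ^ (m + 1))⁻¹ * (1 + t)⁻¹ := by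
  rw [← mul_inv]
  refine inv_anti₀ (by positivity) ?_
  calc c ^ (m + 1) * (1 + t) = c ^ m * (c + c * t) := by ring
    _ ≤ (a + t) ^ m * (a + t) :=
      mul_le_mul (pow_le_pow_left₀ hc.le (by linarith) m) (by nlinarith) (by positivity)
        (pow_nonneg (by linarith) m)
    _ = (a + t) ^ (m + 1) := (pow_succ _ _).symm

section StieltjesMeasure

variable {ν : Measure ℝ}

theorem integrable_inv_add_pow
    (hν₀ : ∀ᵐ t ∂ν, 0 ≤ t) (hν : Integrable (fun t => (1 + t)⁻¹) ν)
    (m : ℕ) {s : ℝ} (hs : 0 < s) :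
    Integrable (fun t => ((s + t) ^ (m + 1))⁻¹) ν := by
  refine (hν.const_mul (min s 1 ^ (m + 1))⁻¹).mono' (by fun_prop) ?_
  filter_upwards [hν₀] with t ht
  rw [Real.norm_of_nonneg (by positivity)]
  exact inv_add_pow_le m (lt_min hs one_pos) (min_le_left _ _) (min_le_right _ _) ht

theorem hasDerivAt_integral_inv_add_pow
    (hν₀ : ∀ᵐ t ∂ν, 0 ≤ t) (hν : Integrable (fun t => (1 + t)⁻¹) ν)
    (m : ℕ) {s : ℝ} (hs : 0 < s) :
    HasDerivAt (fun x => ∫ t, ((x + t) ^ (m + 1))⁻¹ ∂ν)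
      (-(m + 1) * ∫ t, ((s + t) ^ (m + 2))⁻¹ ∂ν) s := by
  have hc : 0 < min (s / 2) 1 := lt_min (half_pos hs) one_pos
  have hball : ∀ x ∈ Metric.ball s (s / 2), s / 2 < x := fun x hx => by
    rw [Metric.mem_ball, Real.dist_eq, abs_lt] at hx
    linarith
  rw [← integral_const_mul]
  refine (hasDerivAt_integral_of_dominated_loc_of_deriv_le
    (F := fun x t => ((x + t) ^ (m + 1))⁻¹) (F' := fun x t => -(m + 1) * ((x + t) ^ (m + 2))⁻¹)
    (bound := fun t => (m + 1) * ((min (s / 2) 1 ^ (m + 2))⁻¹ * (1 + t)⁻¹))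
    (Metric.ball_mem_nhds s (half_pos hs)) (Eventually.of_forall fun x => by fun_prop)
    (integrable_inv_add_pow hν₀ hν m hs) (by fun_prop) ?_
    ((hν.const_mul _).const_mul _) ?_).2
  · filter_upwards [hν₀] with t ht x hx
    have hxt : 0 < x + t := by linarith [hball x hx]
    rw [norm_mul, norm_neg, Real.norm_of_nonneg (by positivity),
      Real.norm_of_nonneg (by positivity)]
    gcongr
    exact inv_add_pow_le (m + 1) hc (by linarith [hball x hx, min_le_left (s / 2) 1])
      (min_le_right _ _) ht
  · filter_upwards [hν₀] with t ht x hx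
    have hxt : x + t ≠ 0 := by linarith [hball x hx]
    have hd := (((hasDerivAt_id' x).add_const t).fun_pow (m + 1)).fun_inv (pow_ne_zero _ hxt)
    refine hd.congr_deriv ?_
    rw [Nat.add_sub_cancel]
    field_simp
    push_cast
    ring

theorem integral_inv_add_pow_sub_mul_nonneg
    (hν₀ : ∀ᵐ t ∂ν, 0 ≤ t) (hν : Integrable (fun t => (1 + t)⁻¹) ν)
    (m : ℕ) {s : ℝ} (hs : 0 < s) :
    0 ≤ (∫ t, ((s + t) ^ (m + 1))⁻¹ ∂ν) - s * ∫ t, ((s + t) ^ (m + 2))⁻¹ ∂ν := by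
  rw [← integral_const_mul, ← integral_sub (integrable_inv_add_pow hν₀ hν m hs)
    ((integrable_inv_add_pow hν₀ hν (m + 1) hs).const_mul s)]
  refine integral_nonneg_of_ae ?_
  filter_upwards [hν₀] with t ht
  have hst : s + t ≠ 0 := by linarith
  have hdiff : ((s + t) ^ (m + 1))⁻¹ - s * ((s + t) ^ (m + 2))⁻¹
      = t * ((s + t) ^ (m + 2))⁻¹ := by
    field_simp
    ring
  rw [Pi.zero_apply, hdiff]
  positivity

noncomputable def stieltjesIteratedDeriv (B : ℝ) (ν : Measure ℝ) (n : ℕ) (s : ℝ) : ℝ :=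
  (-1 : ℝ) ^ n * n.factorial * ∫ t, ((s + t) ^ (n + 1))⁻¹ ∂ν + if n = 0 then B else 0

theorem hasDerivAt_stieltjesIteratedDeriv
    (hν₀ : ∀ᵐ t ∂ν, 0 ≤ t) (hν : Integrable (fun t => (1 + t)⁻¹) ν)
    (B : ℝ) (n : ℕ) {s : ℝ} (hs : 0 < s) :
    HasDerivAt (stieltjesIteratedDeriv B ν n) (stieltjesIteratedDeriv B ν (n + 1) s) s := by
  refine (((hasDerivAt_integral_inv_add_pow hν₀ hν n hs).const_mul
    ((-1 : ℝ) ^ n * n.factorial)).add_const (if n = 0 then B else 0)).congr_deriv ?_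
  simp only [stieltjesIteratedDeriv, Nat.factorial_succ, pow_succ, if_neg n.succ_ne_zero]
  push_cast
  ring

theorem neg_one_pow_mul_stieltjes_bernstein_nonneg
    (hν₀ : ∀ᵐ t ∂ν, 0 ≤ t) (hν : Integrable (fun t => (1 + t)⁻¹) ν)
    {B : ℝ} (hB : 0 ≤ B) (n : ℕ) {s : ℝ} (hs : 0 < s) :
    0 ≤ (-1) ^ n * (s * stieltjesIteratedDeriv B ν (n + 1) s
      + (n + 1) * stieltjesIteratedDeriv B ν n s) := by
  have hsq : ((-1 : ℝ) ^ n) ^ 2 = 1 := by rw [← pow_mul, mul_comm, pow_mul]; simp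
  have hB' : (-1 : ℝ) ^ n * (if n = 0 then B else 0) = if n = 0 then B else 0 := by
    split_ifs with h <;> simp [h]
  have key : (-1) ^ n * (s * stieltjesIteratedDeriv B ν (n + 1) s
      + (n + 1) * stieltjesIteratedDeriv B ν n s)
      = (n + 1).factorial * ((∫ t, ((s + t) ^ (n + 1))⁻¹ ∂ν) - s * ∫ t, ((s + t) ^ (n + 2))⁻¹ ∂ν)
        + (n + 1) * (if n = 0 then B else 0) := by
    simp only [stieltjesIteratedDeriv, if_neg n.succ_ne_zero, Nat.factorial_succ,
      show (-1 : ℝ) ^ (n + 1) = -(-1) ^ n by ring]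
    push_cast
    linear_combination (n + 1 : ℝ) * n.factorial * (∫ t, ((s + t) ^ (n + 1))⁻¹ ∂ν
      - s * ∫ t, ((s + t) ^ (n + 1 + 1))⁻¹ ∂ν) * hsq + (n + 1 : ℝ) * hB'
  rw [key]
  have hite : 0 ≤ if n = 0 then B else 0 := by split_ifs <;> simp [hB]
  have := integral_inv_add_pow_sub_mul_nonneg hν₀ hν n hs
  positivity

theorem iteratedDeriv_eqOn_stieltjesIteratedDeriv
    (hν₀ : ∀ᵐ t ∂ν, 0 ≤ t) (hν : Integrable (fun t => (1 + t)⁻¹) ν)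
    {B : ℝ} {g : ℝ → ℝ}
    (hg : EqOn g (fun s => B + ∫ t, (s + t)⁻¹ ∂ν) (Ioi 0)) (n : ℕ) :
    EqOn (iteratedDeriv n g) (stieltjesIteratedDeriv B ν n) (Ioi 0) :=
  iteratedDeriv_eqOn_of_hasDerivAt_succ isOpen_Ioi
    (fun n _ hx => hasDerivAt_stieltjesIteratedDeriv hν₀ hν B n hx)
    (fun s hs => by simp [hg hs, stieltjesIteratedDeriv, add_comm]) n

theorem contDiffOn_of_eqOn_stieltjes
    (hν₀ : ∀ᵐ t ∂ν, 0 ≤ t) (hν : Integrable (fun t => (1 + t)⁻¹) ν)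
    {B : ℝ} {g : ℝ → ℝ}
    (hg : EqOn g (fun s => B + ∫ t, (s + t)⁻¹ ∂ν) (Ioi 0)) : ContDiffOn ℝ ∞ g (Ioi 0) :=
  (contDiffOn_of_hasDerivAt_succ isOpen_Ioi
    (fun n _ hx => hasDerivAt_stieltjesIteratedDeriv hν₀ hν B n hx)).congr
    fun s hs => by simpa using iteratedDeriv_eqOn_stieltjesIteratedDeriv hν₀ hν hg 0 hs

end StieltjesMeasure

namespace IsStieltjesFun

variable {g : ℝ → ℝ}

/-- The term `A / s` is absorbed into the measure as an atom of mass `A` at `0`. -/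
theorem exists_measure (hg : IsStieltjesFun g) :
    ∃ (B : ℝ) (ν : Measure ℝ), 0 ≤ B ∧ (∀ᵐ t ∂ν, 0 ≤ t) ∧
      Integrable (fun t => (1 + t)⁻¹) ν ∧ EqOn g (fun s => B + ∫ t, (s + t)⁻¹ ∂ν) (Ioi 0) := by
  obtain ⟨A, B, σ, hA, hB, hσ₀, hσ, hrep⟩ := hg
  have hσ₀' : ∀ᵐ t ∂σ, 0 ≤ t :=
    measure_mono_null (fun t (ht : ¬ 0 ≤ t) => (not_le.1 ht).le) hσ₀
  have hσ' : Integrable (fun t => (1 + t)⁻¹) σ := by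
    have hnonneg : 0 ≤ᵐ[σ] fun t => (1 + t)⁻¹ := by
      filter_upwards [hσ₀'] with t ht
      exact inv_nonneg.2 (by linarith)
    exact ⟨by fun_prop, (hasFiniteIntegral_iff_ofReal hnonneg).2 (by simpa only [one_div] using hσ)⟩
  have hδ : ∀ s : ℝ, Integrable (fun t => (s + t)⁻¹) (ENNReal.ofReal A • Measure.dirac 0) :=
    fun s => (integrable_dirac enorm_lt_top).smul_measure ENNReal.ofReal_ne_top
  refine ⟨B, σ + ENNReal.ofReal A • Measure.dirac 0, hB, ?_, hσ'.add_measure ?_, fun s hs => ?_⟩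
  · refine ae_add_measure_iff.2 ⟨hσ₀', Measure.ae_smul_measure ?_ _⟩
    exact (ae_dirac_iff measurableSet_Ici).2 le_rfl
  · simpa using hδ 1
  · have hσs := integrable_inv_add_pow hσ₀' hσ' 0 hs
    simp only [zero_add, pow_one] at hσs
    rw [hrep s hs]
    dsimp only
    rw [integral_add_measure hσs (hδ s), integral_smul_measure, integral_dirac,
      ENNReal.toReal_ofReal hA]
    simp only [one_div, add_zero, smul_eq_mul]
    ring

theorem contDiffOn (hg : IsStieltjesFun g) : ContDiffOn ℝ ∞ g (Ioi 0) := by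
  obtain ⟨B, ν, -, hν₀, hν, hrep⟩ := hg.exists_measure
  exact contDiffOn_of_eqOn_stieltjes hν₀ hν hrep

theorem completelyMonotone_deriv_mul (hg : IsStieltjesFun g) :
    CompletelyMonotone (deriv fun s => s * g s) := by
  obtain ⟨B, ν, hB, hν₀, hν, hrep⟩ := hg.exists_measure
  intro n s hs
  have hg' : ContDiffAt ℝ (n + 1 : ℕ) g s :=
    (hg.contDiffOn.contDiffAt (isOpen_Ioi.mem_nhds hs)).of_le (mod_cast le_top)
  rw [← iteratedDeriv_succ', iteratedDeriv_succ_fun_id_mul hg',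
    iteratedDeriv_eqOn_stieltjesIteratedDeriv hν₀ hν hrep (n + 1) hs,
    iteratedDeriv_eqOn_stieltjesIteratedDeriv hν₀ hν hrep n hs]
  exact neg_one_pow_mul_stieltjes_bernstein_nonneg hν₀ hν hB n hs

end IsStieltjesFun

/-- If `k : (0,∞) → (0,∞)` is completely monotone, `ξ ≥ 0`, and `s ↦ k(s)^{1/2}` is a
Stieltjes function, then `s ↦ k(s)·exp(−ξ·s·k(s)^{1/2})` is completely monotone. -/
theorem completelyMonotone_kernel (k : ℝ → ℝ) (ξ : ℝ)
    (hkpos : ∀ s : ℝ, 0 < s → 0 < k s)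
    (hk : CompletelyMonotone k) (hξ : 0 ≤ ξ)
    (hsqrt : IsStieltjesFun (fun s => Real.sqrt (k s))) :
    CompletelyMonotone (fun s => k s * Real.exp (-ξ * s * Real.sqrt (k s))) := by
  have hg := hsqrt.contDiffOn
  have hk' : ContDiffOn ℝ ∞ k (Ioi 0) :=
    (hg.pow 2).congr fun s hs => (Real.sq_sqrt (hkpos s hs).le).symm
  have hU : ContDiffOn ℝ ∞ (fun s => ξ * (s * Real.sqrt (k s))) (Ioi 0) := by fun_prop
  have hU' : CompletelyMonotone (deriv fun s => ξ * (s * Real.sqrt (k s))) := by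
    rw [deriv_const_mul_field']
    exact hsqrt.completelyMonotone_deriv_mul.const_mul hξ
  convert hk.mul (CompletelyMonotone.exp_neg hU hU') hk' hU.neg.exp using 4
  ring
end

section
/- The variance coefficient for fractional drift is positive: for all α ∈ (0,1), 2/Γ(1+2α) − 1/Γ(1+α)² > 0. -/
open Real intervalIntegral

/-- Elementary inequality: `(1+2α) * 4^(1-α) > 3` on `(0,1)`. -/
lemma frac_var_key (α : ℝ) (h0 : 0 < α) (h1 : α < 1) :
    3 < (1 + 2 * α) * (4 : ℝ) ^ (1 - α) := by
  have hl1 : (0.6931471803 : ℝ) < Real.log 2 := Real.log_two_gt_d9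
  have hl2 : Real.log 2 < 0.6931471808 := Real.log_two_lt_d9
  have hL : Real.log 4 = 2 * Real.log 2 := by
    rw [show (4 : ℝ) = 2 ^ 2 by norm_num, Real.log_pow]; push_cast; ring
  set y := Real.log 4 * (1 - α) with hy_def
  have hy : 0 ≤ y := mul_nonneg (by rw [hL]; linarith) (by linarith)
  have hquad := Real.quadratic_le_exp_of_nonneg hy
  have h4 : (4 : ℝ) ^ (1 - α) = Real.exp y := Real.rpow_def_of_pos (by norm_num) _
  rw [h4]
  have hyval : y = 2 * Real.log 2 * (1 - α) := by rw [hy_def, hL]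
  have h2 : 3 < (1 + 2 * α) * (1 + y + y ^ 2 / 2) := by
    rw [hyval]
    nlinarith [mul_pos (sub_pos.mpr h1) h0, sq_nonneg (1 - α),
      sq_nonneg ((1 - α) * (Real.log 2 - 0.6931471803)),
      mul_pos (mul_pos (sub_pos.mpr h1) (sub_pos.mpr h1)) h0,
      sq_nonneg (Real.log 2 - 0.6931471803)]
  calc (3 : ℝ) < (1 + 2 * α) * (1 + y + y ^ 2 / 2) := h2
    _ ≤ (1 + 2 * α) * Real.exp y :=
        mul_le_mul_of_nonneg_left hquad (by linarith)

/-- Pointwise bound: `4^(1-α) * (x*(1-x)) ≤ x^α * (1-x)^α` for `x ∈ [0,1]`, `0 < α ≤ 1`. -/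
lemma frac_var_pointwise (α : ℝ) (h0 : 0 < α) (h1 : α ≤ 1) {x : ℝ}
    (hx0 : 0 ≤ x) (hx1 : x ≤ 1) :
    (4 : ℝ) ^ (1 - α) * (x * (1 - x)) ≤ x ^ α * (1 - x) ^ α := by
  rcases eq_or_lt_of_le hx0 with h | hx0'
  · simp [← h, Real.zero_rpow (ne_of_gt h0)]
  rcases eq_or_lt_of_le hx1 with h | hx1'
  · simp [h, Real.zero_rpow (ne_of_gt h0)]
  have hb0 : 0 < 4 * (x * (1 - x)) := by nlinarith
  have hb1 : 4 * (x * (1 - x)) ≤ 1 := by nlinarith [sq_nonneg (2 * x - 1)]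
  have hmono : (4 * (x * (1 - x))) ^ (1 : ℝ) ≤ (4 * (x * (1 - x))) ^ α :=
    Real.rpow_le_rpow_of_exponent_ge hb0 hb1 h1
  rw [Real.rpow_one] at hmono
  have hsplit : (4 * (x * (1 - x))) ^ α = 4 ^ α * (x ^ α * (1 - x) ^ α) := by
    rw [Real.mul_rpow (by norm_num) (by nlinarith : (0:ℝ) ≤ x * (1 - x)),
      Real.mul_rpow hx0 (by linarith)]
  rw [hsplit] at hmono
  have h4pos : (0 : ℝ) < (4 : ℝ) ^ α := Real.rpow_pos_of_pos (by norm_num) α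
  have key : (4 : ℝ) ^ α * ((4 : ℝ) ^ (1 - α) * (x * (1 - x))) = 4 * (x * (1 - x)) := by
    rw [← mul_assoc, ← Real.rpow_add (by norm_num : (0:ℝ) < 4),
      show α + (1 - α) = (1 : ℝ) by ring, Real.rpow_one]
  have hfin : (4 : ℝ) ^ α * ((4 : ℝ) ^ (1 - α) * (x * (1 - x)))
      ≤ (4 : ℝ) ^ α * (x ^ α * (1 - x) ^ α) := by
    rw [key]; exact hmono
  exact le_of_mul_le_mul_left hfin h4pos

/-- Beta-function identity: `Γ(1+α)² = Γ(2+2α) * ∫₀¹ x^α (1-x)^α dx`. -/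
lemma frac_var_beta (α : ℝ) (h0 : 0 < α) :
    Real.Gamma (1 + α) ^ 2
      = Real.Gamma (2 + 2 * α) * ∫ x in (0:ℝ)..1, x ^ α * (1 - x) ^ α := by
  have hre : 0 < Complex.re ((1 + α : ℝ) : ℂ) := by simp; linarith
  have hB := Complex.Gamma_mul_Gamma_eq_betaIntegral hre hre
  have hsum : ((1 + α : ℝ) : ℂ) + ((1 + α : ℝ) : ℂ) = ((2 + 2 * α : ℝ) : ℂ) := by
    push_cast; ring
  rw [hsum] at hB
  have hint : Complex.betaIntegral ((1 + α : ℝ) : ℂ) ((1 + α : ℝ) : ℂ)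
      = ((∫ x in (0:ℝ)..1, x ^ α * (1 - x) ^ α : ℝ) : ℂ) := by
    rw [Complex.betaIntegral]
    have hcongr : ∀ x ∈ Set.uIcc (0:ℝ) 1,
        (x : ℂ) ^ (((1 + α : ℝ) : ℂ) - 1) * (1 - (x : ℂ)) ^ (((1 + α : ℝ) : ℂ) - 1)
          = ((x ^ α * (1 - x) ^ α : ℝ) : ℂ) := by
      intro x hx
      rw [Set.uIcc_of_le (by norm_num : (0:ℝ) ≤ 1)] at hx
      obtain ⟨hx0, hx1⟩ := hx
      have e1 : ((1 + α : ℝ) : ℂ) - 1 = ((α : ℝ) : ℂ) := by push_cast; ring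
      have e2 : (1 : ℂ) - (x : ℂ) = (((1 - x : ℝ)) : ℂ) := by push_cast; ring
      rw [e1, e2, ← Complex.ofReal_cpow hx0, ← Complex.ofReal_cpow (by linarith),
        ← Complex.ofReal_mul]
    rw [intervalIntegral.integral_congr hcongr]
    exact RCLike.intervalIntegral_ofReal
  rw [hint, Complex.Gamma_ofReal, Complex.Gamma_ofReal, ← Complex.ofReal_mul,
    ← Complex.ofReal_mul] at hB
  have := Complex.ofReal_inj.mp hB
  rw [sq]; rw [this]

/-- The variance coefficient for fractional drift is positive: for all `α ∈ (0,1)`,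
`2/Γ(1+2α) − 1/Γ(1+α)² > 0`. -/
theorem fractional_variance_coeff_pos (α : ℝ) (hα : α ∈ Set.Ioo (0 : ℝ) 1) :
    0 < 2 / Real.Gamma (1 + 2 * α) - 1 / (Real.Gamma (1 + α)) ^ 2 := by
  obtain ⟨h0, h1⟩ := hα
  have hG1 : 0 < Real.Gamma (1 + α) := Real.Gamma_pos_of_pos (by linarith)
  have hG2 : 0 < Real.Gamma (1 + 2 * α) := Real.Gamma_pos_of_pos (by linarith)
  have hcontf : Continuous fun x : ℝ => x ^ α * (1 - x) ^ α := by
    apply Continuous.mul (Real.continuous_rpow_const h0.le)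
    exact (Real.continuous_rpow_const h0.le).comp (by continuity)
  have hcontg : Continuous fun x : ℝ => (4 : ℝ) ^ (1 - α) * (x * (1 - x)) := by continuity
  have hIbound : (4 : ℝ) ^ (1 - α) * (1 / 6) ≤ ∫ x in (0:ℝ)..1, x ^ α * (1 - x) ^ α := by
    have hgint : ∫ x in (0:ℝ)..1, (4 : ℝ) ^ (1 - α) * (x * (1 - x))
        = (4 : ℝ) ^ (1 - α) * (1 / 6) := by
      rw [intervalIntegral.integral_const_mul]
      have heq : (fun x : ℝ => x * (1 - x)) = fun x : ℝ => x - x ^ 2 := by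
        funext x; ring
      rw [heq, intervalIntegral.integral_sub (continuous_id'.intervalIntegrable _ _)
        ((continuous_pow 2).intervalIntegrable _ _), integral_id, integral_pow]
      norm_num
    rw [← hgint]
    apply intervalIntegral.integral_mono_on (by norm_num)
      (hcontg.intervalIntegrable _ _) (hcontf.intervalIntegrable _ _)
    intro x hx
    exact frac_var_pointwise α h0 h1.le hx.1 hx.2
  have hbeta := frac_var_beta α h0
  have hkey := frac_var_key α h0 h1
  have hGadd : Real.Gamma (2 + 2 * α) = (1 + 2 * α) * Real.Gamma (1 + 2 * α) := by
    have h := Real.Gamma_add_one (s := 1 + 2 * α) (by positivity)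
    rw [show (1 + 2 * α) + 1 = 2 + 2 * α by ring] at h
    exact h
  rw [hGadd] at hbeta
  have h4pos : (0 : ℝ) < (4 : ℝ) ^ (1 - α) := Real.rpow_pos_of_pos (by norm_num) _
  have hmain : Real.Gamma (1 + 2 * α) < 2 * Real.Gamma (1 + α) ^ 2 := by
    have hfac : (0:ℝ) < (1 + 2 * α) * Real.Gamma (1 + 2 * α) := by positivity
    nlinarith [mul_le_mul_of_nonneg_left hIbound hfac.le,
      mul_lt_mul_of_pos_right hkey hG2]
  rw [sub_pos, div_lt_div_iff₀ (by positivity) hG2]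
  linarith
end
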